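/- For ρ > 0 and ν ∈ ℝ define j₁₁(ρ,ν) := (i/2)·(ν² + ρ⁻² + ρ²), j₁₂(ρ,ν) := −ρν + (i/2)·(ν² + ρ⁻² − ρ²), τ₁(ρ,ν) := √((1 + |j₁₁(ρ,ν)|)/2) (positive real root), and τ₂(ρ,ν) := i·j₁₂(ρ,ν)/(2·τ₁(ρ,ν)). Let (ρ_ℓ), (ρ'_ℓ) be sequences of positive reals with ∑_ℓ (ρ_ℓ − √(π/2))² < ∞ and ∑_ℓ (ρ'_ℓ − √(π/2))² < ∞, and let (ν_ℓ), (ν'_ℓ) be square-summable real sequences. Then the complex sequence τ₂(ρ_ℓ,ν_ℓ)·τ₁(ρ'_ℓ,ν'_ℓ) − τ₁(ρ_ℓ,ν_ℓ)·τ₂(ρ'_ℓ,ν'_ℓ) is square-summable: ∑_ℓ |τ₂(ρ_ℓ,ν_ℓ)·τ₁(ρ'_ℓ,ν'_ℓ) − τ₁(ρ_ℓ,ν_ℓ)·τ₂(ρ'_ℓ,ν'_ℓ)|² < ∞. -/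

import Mathlib

/-!
Put `p₀ = (√(π/2), 0)` and `Φ(p, q) = τ₂(p) τ₁(q) − τ₁(p) τ₂(q)` on `(ℝ × ℝ)²`. Since
`τ₁ ≥ 1/√2` never vanishes and `ρ⁻²` is smooth away from `ρ = 0`, `Φ` is differentiable at
`(p₀, p₀)`, and it vanishes on the diagonal. Hence `Φ(x) = O(‖x − (p₀, p₀)‖)` near `(p₀, p₀)`.
The hypotheses say that `ℓ ↦ ((ρ_ℓ, ν_ℓ), (ρ'_ℓ, ν'_ℓ))` is an `ℓ²` perturbation of `(p₀, p₀)`,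
so it converges to that point and its image under `Φ` is square-summable.
-/

/-- The matrix entry `j₁₁(ρ,ν) = (i/2)(ν² + ρ⁻² + ρ²)` of an `SO(3)`-invariant
complex structure relative to the fiducial one. -/
noncomputable def j11 (ρ ν : ℝ) : ℂ :=
  Complex.I / 2 * ((ν ^ 2 + (ρ ^ 2)⁻¹ + ρ ^ 2 : ℝ) : ℂ)

/-- The matrix entry `j₁₂(ρ,ν) = −ρν + (i/2)(ν² + ρ⁻² − ρ²)`. -/
noncomputable def j12 (ρ ν : ℝ) : ℂ :=
  ((-(ρ * ν) : ℝ) : ℂ) + Complex.I / 2 * ((ν ^ 2 + (ρ ^ 2)⁻¹ - ρ ^ 2 : ℝ) : ℂ)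

/-- `τ₁(ρ,ν) = √((1 + |j₁₁(ρ,ν)|)/2)` (positive real root). -/
noncomputable def tau1 (ρ ν : ℝ) : ℝ :=
  Real.sqrt ((1 + ‖j11 ρ ν‖) / 2)

/-- `τ₂(ρ,ν) = i·j₁₂(ρ,ν)/(2 τ₁(ρ,ν))`. -/
noncomputable def tau2 (ρ ν : ℝ) : ℂ :=
  Complex.I * j12 ρ ν / (2 * (tau1 ρ ν : ℂ))

open Asymptotics Filter Topology

theorem Prod.norm_sq_le {E F : Type*} [Norm E] [Norm F] (x : E × F) :
    ‖x‖ ^ 2 ≤ ‖x.1‖ ^ 2 + ‖x.2‖ ^ 2 := by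
  rcases le_total ‖x.1‖ ‖x.2‖ with h | h <;> simp [Prod.norm_def, h, sq_nonneg]

theorem Prod.summable_norm_sq {ι E F : Type*} [SeminormedAddCommGroup E] [SeminormedAddCommGroup F]
    {f : ι → E × F} (h₁ : Summable fun i => ‖(f i).1‖ ^ 2) (h₂ : Summable fun i => ‖(f i).2‖ ^ 2) :
    Summable fun i => ‖f i‖ ^ 2 :=
  (h₁.add h₂).of_nonneg_of_le (fun _ => by positivity) fun i => Prod.norm_sq_le (f i)

theorem summable_norm_sq_comp_of_differentiableAt {E F : Type*} [NormedAddCommGroup E]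
    [NormedSpace ℝ E] [NormedAddCommGroup F] [NormedSpace ℝ F] {Φ : E → F} {x₀ : E}
    (hΦ : DifferentiableAt ℝ Φ x₀) (hΦ₀ : Φ x₀ = 0) {u : ℕ → E}
    (hu : Summable fun n => ‖u n - x₀‖ ^ 2) : Summable fun n => ‖Φ (u n)‖ ^ 2 := by
  have hlim : Tendsto u atTop (𝓝 x₀) := by
    rw [tendsto_iff_norm_sub_tendsto_zero]
    simpa [Real.sqrt_sq (norm_nonneg _)] using hu.tendsto_atTop_zero.sqrt
  have hO : (fun n => Φ (u n)) =O[atTop] fun n => u n - x₀ := by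
    simpa [hΦ₀, Function.comp_def] using hΦ.isBigO_sub.comp_tendsto hlim
  exact summable_of_isBigO_nat hu (hO.norm_norm.pow 2)

theorem norm_j11 (ρ ν : ℝ) : ‖j11 ρ ν‖ = (ν ^ 2 + (ρ ^ 2)⁻¹ + ρ ^ 2) / 2 := by
  rw [j11, norm_mul, norm_div, Complex.norm_I, Complex.norm_two, Complex.norm_real,
    Real.norm_of_nonneg (by positivity)]
  ring

theorem tau1_eq_sqrt (ρ ν : ℝ) : tau1 ρ ν = √((2 + ν ^ 2 + (ρ ^ 2)⁻¹ + ρ ^ 2) / 4) := by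
  rw [tau1, norm_j11]
  congr 1
  ring

theorem tau1_pos (ρ ν : ℝ) : 0 < tau1 ρ ν :=
  Real.sqrt_pos.2 (by positivity)

@[fun_prop]
theorem DifferentiableAt.tau1 {E : Type*} [NormedAddCommGroup E] [NormedSpace ℝ E]
    {f g : E → ℝ} {x : E} (hf : DifferentiableAt ℝ f x) (hg : DifferentiableAt ℝ g x)
    (hx : f x ≠ 0) : DifferentiableAt ℝ (fun y => tau1 (f y) (g y)) x := by
  simp only [tau1_eq_sqrt]
  fun_prop (disch := first | positivity | simp [hx])

@[fun_prop]
theorem DifferentiableAt.tau2 {E : Type*} [NormedAddCommGroup E] [NormedSpace ℝ E]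
    {f g : E → ℝ} {x : E} (hf : DifferentiableAt ℝ f x) (hg : DifferentiableAt ℝ g x)
    (hx : f x ≠ 0) : DifferentiableAt ℝ (fun y => tau2 (f y) (g y)) x := by
  simp only [_root_.tau2, j12, div_eq_mul_inv]
  fun_prop (disch := simp [hx, (tau1_pos _ _).ne'])

theorem stmt_17_general
    (ρ ρ' ν ν' : ℕ → ℝ)
    (hρ : Summable fun ℓ : ℕ => (ρ ℓ - Real.sqrt (Real.pi / 2)) ^ 2)
    (hρ' : Summable fun ℓ : ℕ => (ρ' ℓ - Real.sqrt (Real.pi / 2)) ^ 2)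
    (hν : Summable fun ℓ : ℕ => ν ℓ ^ 2)
    (hν' : Summable fun ℓ : ℕ => ν' ℓ ^ 2) :
    Summable fun ℓ : ℕ =>
      ‖tau2 (ρ ℓ) (ν ℓ) * ((tau1 (ρ' ℓ) (ν' ℓ) : ℝ) : ℂ) -
        ((tau1 (ρ ℓ) (ν ℓ) : ℝ) : ℂ) * tau2 (ρ' ℓ) (ν' ℓ)‖ ^ 2 := by
  set r₀ := √(Real.pi / 2)
  have hr₀ : r₀ ≠ 0 := by positivity
  let Φ : (ℝ × ℝ) × (ℝ × ℝ) → ℂ := fun x =>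
    tau2 x.1.1 x.1.2 * tau1 x.2.1 x.2.2 - tau1 x.1.1 x.1.2 * tau2 x.2.1 x.2.2
  have hΦ : DifferentiableAt ℝ Φ ((r₀, 0), (r₀, 0)) := by fun_prop (disch := exact hr₀)
  have hΦ₀ : Φ ((r₀, 0), (r₀, 0)) = 0 := sub_eq_zero.2 (mul_comm _ _)
  refine summable_norm_sq_comp_of_differentiableAt hΦ hΦ₀
    (u := fun ℓ => ((ρ ℓ, ν ℓ), (ρ' ℓ, ν' ℓ))) ?_
  refine Prod.summable_norm_sq (Prod.summable_norm_sq ?_ ?_) (Prod.summable_norm_sq ?_ ?_) <;>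
    simpa [Real.norm_eq_abs, sq_abs]

/-- Let `(ρ_ℓ)`, `(ρ'_ℓ)` be sequences of positive reals with
`∑ (ρ_ℓ − √(π/2))² < ∞` and `∑ (ρ'_ℓ − √(π/2))² < ∞`, and `(ν_ℓ)`, `(ν'_ℓ)`
square-summable real sequences. Then the complex sequence
`τ₂(ρ_ℓ,ν_ℓ) τ₁(ρ'_ℓ,ν'_ℓ) − τ₁(ρ_ℓ,ν_ℓ) τ₂(ρ'_ℓ,ν'_ℓ)` is square-summable
(the Hilbert–Schmidt condition for unitary equivalence of the two Fock
representations). -/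
theorem stmt_17
    (ρ ρ' ν ν' : ℕ → ℝ)
    (hρpos : ∀ ℓ : ℕ, 0 < ρ ℓ) (hρ'pos : ∀ ℓ : ℕ, 0 < ρ' ℓ)
    (hρ : Summable fun ℓ : ℕ => (ρ ℓ - Real.sqrt (Real.pi / 2)) ^ 2)
    (hρ' : Summable fun ℓ : ℕ => (ρ' ℓ - Real.sqrt (Real.pi / 2)) ^ 2)
    (hν : Summable fun ℓ : ℕ => ν ℓ ^ 2)
    (hν' : Summable fun ℓ : ℕ => ν' ℓ ^ 2) :
    Summable fun ℓ : ℕ =>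
      ‖tau2 (ρ ℓ) (ν ℓ) * ((tau1 (ρ' ℓ) (ν' ℓ) : ℝ) : ℂ) -
        ((tau1 (ρ ℓ) (ν ℓ) : ℝ) : ℂ) * tau2 (ρ' ℓ) (ν' ℓ)‖ ^ 2 :=
  stmt_17_general ρ ρ' ν ν' hρ hρ' hν hν'
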